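/- arXiv:1709.00400 — 5 statements merged into one kernel-verified Lean document; each statement's English description precedes it below -/
import Mathlib

section
/- Let $x, k, y, n$ be positive integers satisfying $(x+1)^k + (x+2)^k + \cdots + (2x)^k = y^n$. If $x \equiv 0 \pmod{4}$ and $k \ge 3$ is odd, then $n \le 2 v_2(x) - 2$. -/
/-!
Write `x = 2^v m` with `m` odd, `v ≥ 2`, and `P_e = ∑_{j ≤ x} j^e`. Modulo `x^2` the binomial
expansion of `(x + j)^k` stops after the linear term, so `T_k(x) ≡ P_k + k x P_{k-1}`, and the
reflection `j ↦ x - j` gives `2 P_k ≡ k x P_{k-1}` for odd `k`; hence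
`2 T_k(x) ≡ 3 k x P_{k-1} (mod x^2)`. For even `e ≥ 2`, the two halves of `[0, 2^(w+2))`
contribute equally to `∑ j^e` modulo `2^(w+2)`, which gives `P_e ≡ 2^(v-1) (mod 2^v)`. So
`v_2(3 k x P_{k-1}) = 2v - 1 < v_2(x^2)`, whence `v_2(T_k(x)) = 2v - 2 = n v_2(y)` with
`v_2(y) ≥ 1`.
-/

/-- `T k x = (x+1)^k + (x+2)^k + ... + (2x)^k`. -/
def T (k x : ℕ) : ℕ := ∑ i ∈ Finset.Icc (x + 1) (2 * x), i ^ k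

open Finset

theorem T_add_pow (k x : ℕ) : T k x + x ^ k = ∑ j ∈ range (x + 1), (x + j) ^ k := by
  rw [sum_range_succ', T, ← Ico_add_one_right_eq_Icc, sum_Ico_eq_sum_range,
    show 2 * x + 1 - (x + 1) = x by omega]
  simp only [add_zero, add_assoc, add_comm 1]

section SquareZero

variable {R : Type*} [CommRing R]

theorem add_pow_succ_of_sq_eq_zero {a : R} (ha : a ^ 2 = 0) (b : R) (k : ℕ) :
    (a + b) ^ (k + 1) = b ^ (k + 1) + (k + 1) * a * b ^ k := by
  induction k with
  | zero => ring
  | succ k ih =>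
    rw [pow_succ, ih]
    push_cast
    linear_combination ((k : R) + 1) * b ^ k * ha

theorem two_mul_sum_range_pow_of_sq_eq_zero {x k : ℕ} (hx : (x : R) ^ 2 = 0) (hk : Odd k) :
    2 * ∑ j ∈ range (x + 1), (j : R) ^ k =
      k * x * ∑ j ∈ range (x + 1), (j : R) ^ (k - 1) := by
  obtain ⟨d, rfl⟩ := hk
  have hreflect : ∑ j ∈ range (x + 1), (j : R) ^ (2 * d + 1) =
      ∑ j ∈ range (x + 1), ((x : R) - j) ^ (2 * d + 1) := by
    rw [← sum_range_reflect]
    refine sum_congr rfl fun j hj => ?_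
    rw [Nat.add_sub_cancel, Nat.cast_sub (Nat.lt_succ_iff.mp (mem_range.mp hj))]
  have hterm (j : ℕ) : ((x : R) - j) ^ (2 * d + 1) =
      -(j : R) ^ (2 * d + 1) + (2 * d + 1) * x * (j : R) ^ (2 * d) := by
    rw [sub_eq_add_neg, add_pow_succ_of_sq_eq_zero hx, Odd.neg_pow ⟨d, rfl⟩,
      Even.neg_pow ⟨d, two_mul d⟩]
    push_cast
    ring
  rw [two_mul]
  nth_rewrite 2 [hreflect]
  simp only [hterm, sum_add_distrib, sum_neg_distrib, ← mul_sum, Nat.add_sub_cancel]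
  push_cast
  ring

theorem two_mul_T_eq_of_sq_eq_zero {x k : ℕ} (hx : (x : R) ^ 2 = 0) (hk : Odd k) (hk1 : 2 ≤ k) :
    2 * (T k x : R) = 3 * k * x * ∑ j ∈ range (x + 1), (j : R) ^ (k - 1) := by
  have hT : (T k x : R) = ∑ j ∈ range (x + 1), ((x : R) + j) ^ k := by
    have h := congrArg (Nat.cast : ℕ → R) (T_add_pow k x)
    push_cast at h
    rwa [pow_eq_zero_of_le hk1 hx, add_zero] at h
  have hP := two_mul_sum_range_pow_of_sq_eq_zero hx hk
  obtain ⟨i, rfl⟩ : ∃ i, k = i + 1 := ⟨k - 1, by omega⟩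
  simp only [hT, add_pow_succ_of_sq_eq_zero hx, sum_add_distrib, ← mul_sum] at hP ⊢
  push_cast at hP ⊢
  linear_combination hP

end SquareZero

theorem sum_range_mul_pow_modEq (M m e : ℕ) :
    ∑ j ∈ range (M * m), j ^ e ≡ m * ∑ j ∈ range M, j ^ e [MOD M] := by
  induction m with
  | zero => simp [Nat.ModEq]
  | succ m ih =>
    rw [Nat.mul_succ, sum_range_add, Nat.succ_mul]
    refine ih.add (Nat.ModEq.sum fun j _ => Nat.ModEq.pow e ?_)
    simp [Nat.ModEq]

theorem add_pow_modEq_of_even {n e : ℕ} (hn : Even n) (he : Even e) (j : ℕ) :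
    (n + j) ^ e ≡ j ^ e [MOD 2 * n] := by
  rw [← ZMod.natCast_eq_natCast_iff]
  obtain ⟨c, rfl⟩ := hn
  have h0 : ((2 * (c + c) : ℕ) : ZMod (2 * (c + c))) = 0 := ZMod.natCast_self _
  have hsq : ((c + c : ℕ) : ZMod (2 * (c + c))) ^ 2 = 0 := by
    rw [← Nat.cast_pow, show (c + c) ^ 2 = 2 * (c + c) * c by ring, Nat.cast_mul, h0, zero_mul]
  rcases e with _ | e
  · simp
  obtain ⟨d, hd⟩ := he
  have hd' : ((e : ZMod (2 * (c + c))) + 1) = d + d := by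
    rw [← Nat.cast_add_one, hd, Nat.cast_add]
  push_cast at h0 hsq ⊢
  rw [add_pow_succ_of_sq_eq_zero hsq]
  linear_combination (d : ZMod (2 * (c + c))) * (j : ZMod (2 * (c + c))) ^ e * h0 +
    (2 * c * j ^ e : ZMod (2 * (c + c))) * hd'

theorem sum_range_two_pow_pow_modEq {e : ℕ} (he : Even e) (he0 : e ≠ 0) (w : ℕ) :
    ∑ j ∈ range (2 ^ (w + 1)), j ^ e ≡ 2 ^ w [MOD 2 ^ (w + 1)] := by
  induction w with
  | zero => simp [sum_range_succ, he0, Nat.ModEq]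
  | succ w ih =>
    have hhalf : ∑ j ∈ range (2 ^ (w + 1)), (2 ^ (w + 1) + j) ^ e ≡
        ∑ j ∈ range (2 ^ (w + 1)), j ^ e [MOD 2 ^ (w + 2)] :=
      Nat.ModEq.sum fun j _ => pow_succ' 2 (w + 1) ▸
        add_pow_modEq_of_even (even_two.pow_of_ne_zero w.succ_ne_zero) he j
    calc ∑ j ∈ range (2 ^ (w + 2)), j ^ e
        = ∑ j ∈ range (2 ^ (w + 1)), j ^ e +
            ∑ j ∈ range (2 ^ (w + 1)), (2 ^ (w + 1) + j) ^ e := by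
          rw [pow_succ, mul_two, sum_range_add]
      _ ≡ 2 * ∑ j ∈ range (2 ^ (w + 1)), j ^ e [MOD 2 ^ (w + 2)] := by
          rw [two_mul]
          exact Nat.ModEq.add_left _ hhalf
      _ ≡ 2 ^ (w + 1) [MOD 2 ^ (w + 2)] := by
          simpa only [← pow_succ'] using ih.mul_left' 2

theorem padicValNat_eq_of_modEq {p a b n t : ℕ} [Fact p.Prime] (h : a ≡ b [MOD n])
    (hn : p ^ (t + 1) ∣ n) (hb : b ≠ 0) (hbt : padicValNat p b = t) : padicValNat p a = t := by
  have h' := h.of_dvd hn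
  have hnd : ¬p ^ (t + 1) ∣ a := by
    rw [h'.dvd_iff dvd_rfl, ← hbt]
    exact pow_succ_padicValNat_not_dvd hb
  have ha : a ≠ 0 := by
    rintro rfl
    exact hnd (dvd_zero _)
  have hd : p ^ t ∣ a := by
    rw [h'.dvd_iff (pow_dvd_pow p t.le_succ), ← hbt]
    exact pow_padicValNat_dvd
  rw [padicValNat_dvd_iff_le ha] at hd hnd
  omega

theorem padicValNat_sum_range_pow {x e : ℕ} (he : Even e) (he0 : e ≠ 0) (hx : x ≠ 0)
    (h2x : 2 ∣ x) : padicValNat 2 (∑ j ∈ range (x + 1), j ^ e) = padicValNat 2 x - 1 := by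
  obtain ⟨v, m, hm, rfl⟩ := Nat.exists_eq_two_pow_mul_odd hx
  obtain ⟨w, rfl⟩ : ∃ w, v = w + 1 := by
    refine ⟨v - 1, (Nat.succ_pred_eq_of_ne_zero fun hv => ?_).symm⟩
    simp [hv, hm.not_two_dvd_nat] at h2x
  have hval : padicValNat 2 (2 ^ (w + 1) * m) = w + 1 := by
    rw [padicValNat.mul (by positivity) hm.pos.ne', padicValNat.prime_pow,
      padicValNat.eq_zero_of_not_dvd hm.not_two_dvd_nat, add_zero]
  rw [hval, Nat.add_sub_cancel]
  obtain ⟨c, rfl⟩ := hm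
  refine padicValNat_eq_of_modEq ?_ dvd_rfl (by positivity) (padicValNat.prime_pow w)
  calc ∑ j ∈ range (2 ^ (w + 1) * (2 * c + 1) + 1), j ^ e
      = ∑ j ∈ range (2 ^ (w + 1) * (2 * c + 1)), j ^ e + (2 ^ (w + 1) * (2 * c + 1)) ^ e :=
        sum_range_succ _ _
    _ ≡ (2 * c + 1) * 2 ^ w + 0 [MOD 2 ^ (w + 1)] :=
        ((sum_range_mul_pow_modEq _ _ e).trans
          ((sum_range_two_pow_pow_modEq he he0 w).mul_left _)).add
          (Nat.modEq_zero_iff_dvd.2 (dvd_pow (dvd_mul_right _ _) he0))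
    _ = 2 ^ (w + 1) * c + 2 ^ w := by ring
    _ ≡ 2 ^ w [MOD 2 ^ (w + 1)] := by simp [Nat.ModEq]

theorem padicValNat_T {k x : ℕ} (hx : x ≠ 0) (h4x : 4 ∣ x) (hk : Odd k) (hk3 : 3 ≤ k) :
    padicValNat 2 (T k x) = 2 * padicValNat 2 x - 2 := by
  set v := padicValNat 2 x
  have hv : 2 ≤ v := (padicValNat_dvd_iff_le hx).1 h4x
  set Q := ∑ j ∈ range (x + 1), j ^ (k - 1)
  have hQ : padicValNat 2 Q = v - 1 :=
    padicValNat_sum_range_pow (hk.tsub_odd odd_one) (by omega) hx ((dvd_mul_left 2 2).trans h4x)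
  have hQ0 : Q ≠ 0 := by
    rintro hQ0
    rw [hQ0, padicValNat_zero_right] at hQ
    omega
  have hcong : 2 * T k x ≡ 3 * k * x * Q [MOD x ^ 2] := by
    rw [← ZMod.natCast_eq_natCast_iff]
    push_cast [Q]
    exact two_mul_T_eq_of_sq_eq_zero (by exact_mod_cast ZMod.natCast_self (x ^ 2)) hk (by omega)
  have hval : padicValNat 2 (3 * k * x * Q) = 2 * v - 1 := by
    rw [padicValNat.mul (by positivity) hQ0, padicValNat.mul (by positivity) hx,
      padicValNat.mul three_ne_zero hk.pos.ne', hQ,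
      padicValNat.eq_zero_of_not_dvd hk.not_two_dvd_nat,
      padicValNat.eq_zero_of_not_dvd (by decide : ¬2 ∣ 3)]
    omega
  have hx2 : 2 ^ (2 * v - 1 + 1) ∣ x ^ 2 := by
    rw [show 2 * v - 1 + 1 = v * 2 by omega, pow_mul]
    exact pow_dvd_pow_of_dvd pow_padicValNat_dvd 2
  have h2T := padicValNat_eq_of_modEq hcong hx2 (by positivity) hval
  have hT0 : T k x ≠ 0 := by
    rintro hT0
    rw [hT0, mul_zero, padicValNat_zero_right] at h2T
    omega
  rw [padicValNat.mul two_ne_zero hT0, padicValNat.self one_lt_two] at h2T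
  omega

theorem stmt_1_general (x k y n : ℕ) (hx : 0 < x) (heq : T k x = y ^ n) (hx4 : x % 4 = 0) (hk3 : 3 ≤ k)
    (hkodd : Odd k) :
    n ≤ 2 * padicValNat 2 x - 2 := by
  have h4x : 4 ∣ x := Nat.dvd_of_mod_eq_zero hx4
  have hv : 2 ≤ padicValNat 2 x := (padicValNat_dvd_iff_le hx.ne').1 h4x
  have hval := padicValNat_T hx.ne' h4x hkodd hk3
  rw [heq, padicValNat.pow] at hval
  have hy : 1 ≤ padicValNat 2 y := by
    by_contra! hy
    rw [Nat.lt_one_iff.mp hy, mul_zero] at hval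
    omega
  calc n ≤ n * padicValNat 2 y := Nat.le_mul_of_pos_right n hy
    _ = 2 * padicValNat 2 x - 2 := hval

theorem stmt_1 (x k y n : ℕ) (hx : 0 < x) (hk : 0 < k) (hy : 0 < y) (hn : 0 < n)
    (heq : T k x = y ^ n) (hx4 : x % 4 = 0) (hk3 : 3 ≤ k) (hkodd : Odd k) :
    n ≤ 2 * padicValNat 2 x - 2 :=
  stmt_1_general x k y n hx heq hx4 hk3 hkodd
end

section
/- Let $x, k, y, n$ be positive integers satisfying $(x+1)^k + (x+2)^k + \cdots + (2x)^k = y^n$. If $x \equiv 5 \pmod{8}$ and $k \ge 3$ is odd, then $n \le v_2(3x+1)$. -/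
/-!
Put `M = 3x + 1 = 2m` and pair `i` with `M - i` for `x < i < m`; the middle term `m ^ k` is left
over. For odd `k ≥ 3` and even `M`, `i ^ k + (M - i) ^ k ≡ M i (mod 2M)`, so
`T_k(x) ≡ M S + m ^ k (mod 2M)` with `S = (x + 1) + ⋯ + (m - 1)`, which is odd when `x ≡ 5 (mod 8)`.
As `v₂(m ^ k) = k v₂(m) > v₂(M)`, this gives `T_k(x) ≡ M (mod 2 ^ (v₂(M) + 1))`, hence
`n v₂(y) = v₂(y ^ n) = v₂(M) ≥ 1`, and so `n ≤ v₂(M)`.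
-/

open Finset

theorem Int.pow_add_pow_sub_modEq {k : ℕ} (hk : Odd k) (hk1 : k ≠ 1) {M : ℤ} (hM : Even M)
    (a : ℤ) : a ^ k + (M - a) ^ k ≡ M * a [ZMOD 2 * M] := by
  have hsq : M ^ 2 ∣ (M - a) ^ k + a ^ k - a ^ (k - 1) * M * k := by
    have h := sq_dvd_add_pow_sub_sub M (-a) k
    rwa [(Nat.Odd.sub_odd hk odd_one).neg_pow, hk.neg_pow, neg_add_eq_sub, sub_neg_eq_add,
      sub_add_eq_add_sub] at h
  have hpar : Even (a ^ (k - 1) * k - a) := by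
    rw [Int.even_sub, Int.even_mul, Int.even_pow, Int.even_coe_nat]
    have : k - 1 ≠ 0 := by have := hk.pos; omega
    simp [Nat.not_even_iff_odd.mpr hk, this]
  obtain ⟨c, rfl⟩ := hM
  obtain ⟨d, hd⟩ := hpar
  obtain ⟨e, he⟩ := hsq
  rw [Int.modEq_iff_dvd]
  exact ⟨-c * e - d, by linear_combination -he - (c + c) * hd⟩

theorem Finset.sum_Ico_id_mul_two {a b : ℕ} (h : a ≤ b) :
    (∑ i ∈ Ico a b, i) * 2 + a * (a - 1) = b * (b - 1) := by
  rw [← sum_range_id_mul_two, ← sum_range_id_mul_two, ← sum_range_add_sum_Ico _ h]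
  ring

theorem padicValNat_eq_of_intModEq {p a b : ℕ} [Fact p.Prime] (hb : b ≠ 0)
    (h : (a : ℤ) ≡ b [ZMOD p ^ (padicValNat p b + 1)]) : padicValNat p a = padicValNat p b := by
  set v := padicValNat p b
  have hdiff : (p : ℤ) ^ (v + 1) ∣ b - a := Int.ModEq.dvd h
  have hb_dvd : (p : ℤ) ^ v ∣ b := by exact_mod_cast pow_padicValNat_dvd
  have hb_not : ¬ (p : ℤ) ^ (v + 1) ∣ b := by exact_mod_cast pow_succ_padicValNat_not_dvd hb
  have ha : a ≠ 0 := by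
    rintro rfl
    exact hb_not (by simpa using hdiff)
  have ha_dvd : p ^ v ∣ a := by
    have : (p : ℤ) ^ v ∣ b - (b - a) := dvd_sub hb_dvd ((pow_dvd_pow _ v.le_succ).trans hdiff)
    exact_mod_cast (sub_sub_cancel (b : ℤ) a) ▸ this
  have ha_not : ¬ p ^ (v + 1) ∣ a := fun h' =>
    hb_not (by simpa using dvd_add (Int.natCast_dvd_natCast.mpr h') hdiff)
  have h1 := (padicValNat_dvd_iff_le ha).mp ha_dvd
  have h2 := mt (padicValNat_dvd_iff_le ha).mpr ha_not
  omega

theorem le_padicValNat_pow {p y n : ℕ} [Fact p.Prime] (h : padicValNat p (y ^ n) ≠ 0) :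
    n ≤ padicValNat p (y ^ n) := by
  rcases eq_or_ne y 0 with rfl | hy
  · rcases n with _ | n
    · simp
    · simp at h
  · rw [padicValNat.pow] at h ⊢
    exact Nat.le_mul_of_pos_right n (Nat.pos_of_ne_zero (right_ne_zero_of_mul h))

theorem T_eq_sum_pairs_add (k : ℕ) {x m : ℕ} (hm : 3 * x + 1 = 2 * m) :
    T k x = ∑ i ∈ Ico (x + 1) m, (i ^ k + (2 * m - i) ^ k) + m ^ k := by
  have hreflect :
      ∑ i ∈ Ico (x + 1) m, (2 * m - i) ^ k = ∑ i ∈ Ico (m + 1) (2 * x + 1), i ^ k := by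
    rw [sum_Ico_reflect (fun i => i ^ k) _ (by omega), show 2 * m + 1 - m = m + 1 by omega,
      show 2 * m + 1 - (x + 1) = 2 * x + 1 by omega]
  rw [T, ← Ico_add_one_right_eq_Icc, ← sum_Ico_consecutive _ (by omega : x + 1 ≤ m) (by omega),
    sum_eq_sum_Ico_succ_bot (by omega : m < 2 * x + 1), sum_add_distrib, hreflect]
  ring

theorem odd_sum_Ico_of_mod_eight {x m : ℕ} (hm : 3 * x + 1 = 2 * m) (hx : x % 8 = 5) :
    Odd (∑ i ∈ Ico (x + 1) m, i) := by
  obtain ⟨t, rfl⟩ : ∃ t, x = 8 * t + 5 := ⟨x / 8, by omega⟩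
  obtain rfl : m = 12 * t + 8 := by omega
  have h := sum_Ico_id_mul_two (by omega : 8 * t + 5 + 1 ≤ 12 * t + 8)
  rw [show 8 * t + 5 + 1 - 1 = 8 * t + 5 by omega, show 12 * t + 8 - 1 = 12 * t + 7 by omega] at h
  exact ⟨20 * t ^ 2 + 23 * t + 6, by linarith⟩

theorem T_modEq_sum_Ico_add {k x m : ℕ} (hk : Odd k) (hk1 : k ≠ 1) (hm : 3 * x + 1 = 2 * m) :
    (T k x : ℤ) ≡ 2 * m * ∑ i ∈ Ico (x + 1) m, (i : ℤ) + (m : ℤ) ^ k [ZMOD 2 * (2 * m)] := by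
  have hcast : (T k x : ℤ) = ∑ i ∈ Ico (x + 1) m, ((i : ℤ) ^ k + (2 * m - i) ^ k) + m ^ k := by
    rw [T_eq_sum_pairs_add k hm]
    push_cast
    congr 1
    refine sum_congr rfl fun i hi => ?_
    rw [Nat.cast_sub (by simp only [mem_Ico] at hi; omega)]
    push_cast
    ring
  rw [hcast, mul_sum]
  gcongr with i
  exact Int.pow_add_pow_sub_modEq hk hk1 (even_two_mul _) i

theorem T_modEq_of_mod_eight {k x : ℕ} (hk : Odd k) (hk3 : 3 ≤ k) (hx : x % 8 = 5) :
    (T k x : ℤ) ≡ ((3 * x + 1 : ℕ) : ℤ) [ZMOD 2 ^ (padicValNat 2 (3 * x + 1) + 1)] := by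
  obtain ⟨m, hm⟩ : ∃ m, 3 * x + 1 = 2 * m := ⟨(3 * x + 1) / 2, by omega⟩
  obtain ⟨j, hj⟩ := odd_sum_Ico_of_mod_eight hm hx
  set w := padicValNat 2 m
  have hw : 1 ≤ w := one_le_padicValNat_of_dvd (by omega) (by omega)
  have hv : padicValNat 2 (3 * x + 1) = w + 1 := by
    rw [hm, padicValNat.mul two_ne_zero (by omega), padicValNat_self, add_comm]
  have hmw : (2 : ℤ) ^ w ∣ m := by exact_mod_cast pow_padicValNat_dvd
  rw [hv, hm]
  push_cast
  have hmod : (2 : ℤ) ^ (w + 1 + 1) ∣ 2 * (2 * m) := by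
    rw [show (2 : ℤ) ^ (w + 1 + 1) = 4 * 2 ^ w by ring, show 2 * (2 * (m : ℤ)) = 4 * m by ring]
    exact mul_dvd_mul_left 4 hmw
  have hpow : (2 : ℤ) ^ (w + 1 + 1) ∣ (m : ℤ) ^ k :=
    (pow_dvd_pow 2 (by nlinarith)).trans (pow_mul (2 : ℤ) w k ▸ pow_dvd_pow_of_dvd hmw k)
  have hsum : ∑ i ∈ Ico (x + 1) m, (i : ℤ) = 2 * j + 1 := by
    rw [← Nat.cast_sum, hj]
    push_cast
    rfl
  refine ((T_modEq_sum_Ico_add hk (by omega) hm).of_dvd hmod).trans ?_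
  rw [hsum, Int.modEq_iff_dvd, show 2 * (m : ℤ) - (2 * m * (2 * j + 1) + m ^ k)
    = -(2 * (2 * m) * j + m ^ k) by ring]
  exact (dvd_add (hmod.mul_right j) hpow).neg_right

theorem stmt_5_general (x k y n : ℕ) (heq : T k x = y ^ n) (hx8 : x % 8 = 5) (hk3 : 3 ≤ k)
    (hkodd : Odd k) : n ≤ padicValNat 2 (3 * x + 1) := by
  have hv := padicValNat_eq_of_intModEq (by omega) (T_modEq_of_mod_eight hkodd hk3 hx8)
  have hv0 : padicValNat 2 (3 * x + 1) ≠ 0 := padicValNat.eq_zero_iff.not.mpr (by omega)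
  rw [← hv, heq] at hv0 ⊢
  exact le_padicValNat_pow hv0

theorem stmt_5 (x k y n : ℕ) (hx : 0 < x) (hy : 0 < y) (hn : 0 < n)
    (heq : T k x = y ^ n) (hx8 : x % 8 = 5) (hk3 : 3 ≤ k) (hkodd : Odd k) :
    n ≤ padicValNat 2 (3 * x + 1) :=
  stmt_5_general x k y n heq hx8 hk3 hkodd
end

section
/- Let $x, k, y, n$ be positive integers satisfying $(x+1)^k + (x+2)^k + \cdots + (2x)^k = y^n$. Then: (a) if $x \equiv 5 \pmod{8}$ and $k \ge 2$ is even, then $n \le 1$; (b) if $x \equiv 9 \pmod{16}$ and $k \ge 4$ is even, then $n \le 2$; (c) if $x \equiv 9 \pmod{16}$ and $k \ge 5$ is odd, or if $x \equiv 17 \pmod{32}$ and $k \ge 4$ is even, then $n \le 3$; (d) if $x \equiv 17 \pmod{32}$ and $k \ge 5$ is odd, then $n \le 4$. -/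
open Finset Nat

theorem le_of_pow_modEq_prime_pow {p y n t : ℕ} (hp : p.Prime) (ht : t ≠ 0)
    (h : y ^ n ≡ p ^ t [MOD p ^ (t + 1)]) : n ≤ t := by
  by_contra! htn
  have hpy : p ∣ y :=
    hp.dvd_of_dvd_pow <| (h.dvd_iff (dvd_pow_self p t.succ_ne_zero)).mpr (dvd_pow_self p ht)
  have hdvd : p ^ (t + 1) ∣ p ^ t :=
    (h.dvd_iff dvd_rfl).mp ((pow_dvd_pow p htn).trans (pow_dvd_pow_of_dvd hpy n))
  exact absurd ((Nat.pow_dvd_pow_iff_le_right hp.one_lt).mp hdvd) (by omega)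

theorem ZMod.pow_eq_pow_of_modEq_totient {n : ℕ} (u : (ZMod n)ˣ) {k k' : ℕ}
    (h : k ≡ k' [MOD φ n]) : u ^ k = u ^ k' :=
  pow_eq_pow_iff_modEq.mpr (h.of_dvd (orderOf_dvd_of_pow_eq_one (ZMod.pow_totient u)))

theorem ZMod.natCast_pow_eq_pow_of_modEq_totient {p m k k' : ℕ} (hp : p.Prime) (hk : m ≤ k)
    (hk' : m ≤ k') (h : k ≡ k' [MOD φ (p ^ m)]) (i : ℕ) :
    (i : ZMod (p ^ m)) ^ k = (i : ZMod (p ^ m)) ^ k' := by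
  by_cases hpi : p ∣ i
  · have hzero : ∀ e, m ≤ e → (i : ZMod (p ^ m)) ^ e = 0 := fun e he => by
      rw [← Nat.cast_pow, ZMod.natCast_eq_zero_iff]
      exact (pow_dvd_pow p he).trans (pow_dvd_pow_of_dvd hpi e)
    rw [hzero k hk, hzero k' hk']
  · have hcop : i.Coprime (p ^ m) := (hp.coprime_iff_not_dvd.mpr hpi).symm.pow_right m
    have := congrArg Units.val (pow_eq_pow_of_modEq_totient (ZMod.unitOfCoprime i hcop) h)
    simpa only [Units.val_pow_eq_pow_val, ZMod.coe_unitOfCoprime] using this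

theorem sum_range_add_period {G : Type*} [AddCommMonoid G] {f : ℕ → G} {L : ℕ}
    (hf : Function.Periodic f L) (n : ℕ) :
    ∑ i ∈ range (n + L), f i = ∑ i ∈ range n, f i + ∑ i ∈ range L, f i := by
  rw [add_comm n, sum_range_add, add_comm]
  exact congrArg (· + _) (sum_congr rfl fun i _ => by rw [add_comm, hf])

section CommRing

variable {R : Type*} [CommRing R]

theorem natCast_T (k x : ℕ) :
    (T k x : R) = ∑ i ∈ range (2 * x + 1), (i : R) ^ k - ∑ i ∈ range (x + 1), (i : R) ^ k := by
  rw [T, ← Ico_add_one_right_eq_Icc, Nat.cast_sum, ← sum_Ico_eq_sub _ (by omega)]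
  push_cast
  rfl

/-- Shifting `x` by `L` drops one period from the left end of the window `(x, 2x]` and adds two
at its right end. -/
theorem natCast_T_add_period {L : ℕ} (k : ℕ) (hL : (L : R) = 0) (x : ℕ) :
    (T k (x + L) : R) = T k x + ∑ i ∈ range L, (i : R) ^ k := by
  have hper : Function.Periodic (fun i : ℕ => (i : R) ^ k) L := fun i => by
    simp only [Nat.cast_add, hL, add_zero]
  rw [natCast_T, natCast_T, show 2 * (x + L) + 1 = 2 * x + 1 + L + L by ring,
    show x + L + 1 = x + 1 + L by ring, sum_range_add_period hper, sum_range_add_period hper,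
    sum_range_add_period hper]
  abel

theorem natCast_T_eq_of_modEq {L k x x' : ℕ} (hL : (L : R) = 0)
    (hW : ∑ i ∈ range L, (i : R) ^ k = 0) (hx : x ≡ x' [MOD L]) : (T k x : R) = T k x' := by
  have hmod : ∀ y, (T k y : R) = T k (y % L) := fun y => by
    conv_lhs => rw [← Nat.mod_add_div y L]
    induction y / L with
    | zero => simp
    | succ q ih => rw [mul_add_one, ← add_assoc, natCast_T_add_period k hL, ih, hW, add_zero]
  rw [hmod x, hmod x', hx]

end CommRing

theorem ZMod.natCast_T_eq_of_modEq_totient {p m L k k' x x' : ℕ} (hp : p.Prime) (hk : m ≤ k)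
    (hk' : m ≤ k') (hkk' : k ≡ k' [MOD φ (p ^ m)]) (hL : p ^ m ∣ L)
    (hW : ∑ i ∈ range L, (i : ZMod (p ^ m)) ^ k' = 0) (hxx' : x ≡ x' [MOD L]) :
    (T k x : ZMod (p ^ m)) = T k' x' := by
  rw [← natCast_T_eq_of_modEq ((ZMod.natCast_eq_zero_iff L _).mpr hL) hW hxx']
  simp only [T, Nat.cast_sum, Nat.cast_pow, natCast_pow_eq_pow_of_modEq_totient hp hk hk' hkk']

theorem T_modEq_two_mod_four {k x : ℕ} (hx : x % 8 = 5) (hk : 2 ≤ k) (he : Even k) :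
    T k x ≡ 2 [MOD 4] := by
  have hφ : φ (2 ^ 2) = 2 := by decide
  rw [← ZMod.natCast_eq_natCast_iff, show 4 = 2 ^ 2 from rfl,
    ZMod.natCast_T_eq_of_modEq_totient (k' := 2) (L := 8) (x' := 5) prime_two hk le_rfl
      (by rw [hφ, Nat.ModEq, even_iff.mp he]) (by norm_num) (by decide) hx]
  decide

theorem T_modEq_four_mod_eight {k x : ℕ} (hx : x % 16 = 9) (hk : 4 ≤ k) (he : Even k) :
    T k x ≡ 4 [MOD 8] := by
  have hφ : φ (2 ^ 3) = 4 := by decide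
  have hres : ∀ r < 4, r % 2 = 0 → ∑ i ∈ range 16, (i : ZMod (2 ^ 3)) ^ (r + 4) = 0 ∧
      (T (r + 4) 9 : ZMod (2 ^ 3)) = 4 := by decide
  obtain ⟨hW, hT⟩ := hres (k % 4) (k.mod_lt (by norm_num)) (by have := even_iff.mp he; omega)
  rw [← ZMod.natCast_eq_natCast_iff, show 8 = 2 ^ 3 from rfl,
    ZMod.natCast_T_eq_of_modEq_totient (L := 16) (x' := 9) prime_two (by omega) (by omega)
      (by rw [hφ, Nat.ModEq]; omega) (by norm_num) hW hx, hT]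
  rfl

theorem T_modEq_eight_mod_sixteen_of_odd {k x : ℕ} (hx : x % 16 = 9) (hk : 5 ≤ k)
    (ho : Odd k) : T k x ≡ 8 [MOD 16] := by
  have hφ : φ (2 ^ 4) = 8 := by decide
  have hres : ∀ r < 8, r % 2 = 1 → ∑ i ∈ range 16, (i : ZMod (2 ^ 4)) ^ (r + 8) = 0 ∧
      (T (r + 8) 9 : ZMod (2 ^ 4)) = 8 := by decide
  obtain ⟨hW, hT⟩ := hres (k % 8) (k.mod_lt (by norm_num)) (by have := odd_iff.mp ho; omega)
  rw [← ZMod.natCast_eq_natCast_iff, show 16 = 2 ^ 4 from rfl,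
    ZMod.natCast_T_eq_of_modEq_totient (L := 16) (x' := 9) prime_two (by omega) (by omega)
      (by rw [hφ, Nat.ModEq]; omega) (by norm_num) hW hx, hT]
  rfl

theorem T_modEq_eight_mod_sixteen_of_even {k x : ℕ} (hx : x % 32 = 17) (hk : 4 ≤ k)
    (he : Even k) : T k x ≡ 8 [MOD 16] := by
  have hφ : φ (2 ^ 4) = 8 := by decide
  have hres : ∀ r < 8, r % 2 = 0 → ∑ i ∈ range 32, (i : ZMod (2 ^ 4)) ^ (r + 8) = 0 ∧
      (T (r + 8) 17 : ZMod (2 ^ 4)) = 8 := by decide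
  obtain ⟨hW, hT⟩ := hres (k % 8) (k.mod_lt (by norm_num)) (by have := even_iff.mp he; omega)
  rw [← ZMod.natCast_eq_natCast_iff, show 16 = 2 ^ 4 from rfl,
    ZMod.natCast_T_eq_of_modEq_totient (L := 32) (x' := 17) prime_two hk (by omega)
      (by rw [hφ, Nat.ModEq]; omega) (by norm_num) hW hx, hT]
  rfl

theorem T_modEq_sixteen_mod_thirtyTwo {k x : ℕ} (hx : x % 32 = 17) (hk : 5 ≤ k) (ho : Odd k) :
    T k x ≡ 16 [MOD 32] := by
  have hφ : φ (2 ^ 5) = 16 := by decide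
  have hres : ∀ r < 16, r % 2 = 1 → ∑ i ∈ range 32, (i : ZMod (2 ^ 5)) ^ (r + 16) = 0 ∧
      (T (r + 16) 17 : ZMod (2 ^ 5)) = 16 := by decide
  obtain ⟨hW, hT⟩ := hres (k % 16) (k.mod_lt (by norm_num)) (by have := odd_iff.mp ho; omega)
  rw [← ZMod.natCast_eq_natCast_iff, show 32 = 2 ^ 5 from rfl,
    ZMod.natCast_T_eq_of_modEq_totient (L := 32) (x' := 17) prime_two hk (by omega)
      (by rw [hφ, Nat.ModEq]; omega) (by norm_num) hW hx, hT]
  rfl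

theorem stmt_6_general (x k y n : ℕ)
    (heq : T k x = y ^ n) :
    (x % 8 = 5 → 2 ≤ k → Even k → n ≤ 1) ∧
    (x % 16 = 9 → 4 ≤ k → Even k → n ≤ 2) ∧
    ((x % 16 = 9 ∧ 5 ≤ k ∧ Odd k) ∨ (x % 32 = 17 ∧ 4 ≤ k ∧ Even k) → n ≤ 3) ∧
    (x % 32 = 17 → 5 ≤ k → Odd k → n ≤ 4) := by
  have bound : ∀ t, t ≠ 0 → T k x ≡ 2 ^ t [MOD 2 ^ (t + 1)] → n ≤ t := fun t ht h =>
    le_of_pow_modEq_prime_pow prime_two ht (heq ▸ h)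
  refine ⟨fun hx hk he => bound 1 one_ne_zero (T_modEq_two_mod_four hx hk he),
    fun hx hk he => bound 2 two_ne_zero (T_modEq_four_mod_eight hx hk he), ?_,
    fun hx hk ho => bound 4 four_ne_zero (T_modEq_sixteen_mod_thirtyTwo hx hk ho)⟩
  rintro (⟨hx, hk, ho⟩ | ⟨hx, hk, he⟩)
  · exact bound 3 three_ne_zero (T_modEq_eight_mod_sixteen_of_odd hx hk ho)
  · exact bound 3 three_ne_zero (T_modEq_eight_mod_sixteen_of_even hx hk he)

theorem stmt_6 (x k y n : ℕ) (hx : 0 < x) (hk : 0 < k) (hy : 0 < y) (hn : 0 < n)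
    (heq : T k x = y ^ n) :
    (x % 8 = 5 → 2 ≤ k → Even k → n ≤ 1) ∧
    (x % 16 = 9 → 4 ≤ k → Even k → n ≤ 2) ∧
    ((x % 16 = 9 ∧ 5 ≤ k ∧ Odd k) ∨ (x % 32 = 17 ∧ 4 ≤ k ∧ Even k) → n ≤ 3) ∧
    (x % 32 = 17 → 5 ≤ k → Odd k → n ≤ 4) :=
  stmt_6_general x k y n heq
end

section
/- Let $x$ be a positive odd integer. Then $v_2(T_1(x)) = v_2(3x+1) - 1$. Moreover, for every positive integer $k$, if $x \equiv 3 \pmod{8}$ or $x \equiv 7 \pmod{8}$, then $v_2(T_k(x)) = 0$. -/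
lemma T_one_mul_two (x : ℕ) : T 1 x * 2 = x * (3 * x + 1) := by
  have hsplit : ∑ i ∈ Finset.range (x + 1), i + T 1 x = ∑ i ∈ Finset.range (2 * x + 1), i := by
    simp only [T, pow_one, Finset.range_eq_Ico, ← Finset.Ico_add_one_right_eq_Icc]
    exact Finset.sum_Ico_consecutive _ (Nat.zero_le _) (by omega)
  have hsmall := Finset.sum_range_id_mul_two (x + 1)
  have hlarge := Finset.sum_range_id_mul_two (2 * x + 1)
  simp only [Nat.add_sub_cancel] at hsmall hlarge
  nlinarith

lemma padicValNat_two_T_one_add_one {x : ℕ} (hx : Odd x) :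
    padicValNat 2 (T 1 x) + 1 = padicValNat 2 (3 * x + 1) := by
  have hx0 : x ≠ 0 := by rintro rfl; simp at hx
  have hT : T 1 x ≠ 0 := by
    intro h
    have := T_one_mul_two x
    simp [h, hx0] at this
  have hvx : padicValNat 2 x = 0 := padicValNat.eq_zero_of_not_dvd hx.not_two_dvd_nat
  have := congrArg (padicValNat 2) (T_one_mul_two x)
  rwa [padicValNat.mul hT two_ne_zero, padicValNat.mul hx0 (by omega), padicValNat.self one_lt_two,
    hvx, zero_add] at this

lemma T_one_mod_two_of_mod_four {x : ℕ} (hx : x % 4 = 3) : T 1 x % 2 = 1 := by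
  obtain ⟨m, rfl⟩ : ∃ m, x = 4 * m + 3 := ⟨x / 4, by omega⟩
  have hT : T 1 (4 * m + 3) = (4 * m + 3) * (6 * m + 5) := by
    have := T_one_mul_two (4 * m + 3)
    nlinarith
  rw [hT]
  exact Nat.odd_iff.mp (Odd.mul ⟨2 * m + 1, by ring⟩ ⟨3 * m + 2, by ring⟩)

lemma T_mod_two {k : ℕ} (hk : k ≠ 0) (x : ℕ) : T k x % 2 = T 1 x % 2 := by
  have hpow (i : ℕ) : i ^ k % 2 = i % 2 := by
    rw [Nat.pow_mod]
    rcases Nat.mod_two_eq_zero_or_one i with h | h <;> simp [h, hk]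
  simp only [T, pow_one]
  rw [Finset.sum_nat_mod]
  simp only [hpow]
  rw [← Finset.sum_nat_mod]

theorem stmt_17_general (x : ℕ) (hxodd : Odd x) :
    padicValNat 2 (T 1 x) = padicValNat 2 (3 * x + 1) - 1 ∧
    (∀ k : ℕ, 0 < k → (x % 8 = 3 ∨ x % 8 = 7) → padicValNat 2 (T k x) = 0) := by
  refine ⟨by rw [← padicValNat_two_T_one_add_one hxodd, Nat.add_sub_cancel], ?_⟩
  intro k hk hx8
  have hodd : T k x % 2 = 1 := by
    rw [T_mod_two hk.ne', T_one_mod_two_of_mod_four (by omega)]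
  exact padicValNat.eq_zero_of_not_dvd (by omega)

theorem stmt_17 (x : ℕ) (hx : 0 < x) (hxodd : Odd x) :
    padicValNat 2 (T 1 x) = padicValNat 2 (3 * x + 1) - 1 ∧
    (∀ k : ℕ, 0 < k → (x % 8 = 3 ∨ x % 8 = 7) → padicValNat 2 (T k x) = 0) :=
  stmt_17_general x hxodd
end

section
/- Let $x$ be a positive odd integer with $x \equiv 1 \pmod{8}$ or $x \equiv 5 \pmod{8}$, and $x \not\equiv 1 \pmod{32}$, and let $k \ge 2$ be an integer. Then: (a) if $x \equiv 1 \pmod{8}$ and $k = 2$, then $v_2(T_k(x)) = v_2(7x+1) - 1$; (b) if $x \equiv 1 \pmod{8}$ and $k = 3$, then $v_2(T_k(x)) = v_2((5x+3)(3x+1)) - 2$; (c) if $x \equiv 5 \pmod{8}$ and $k \ge 3$ is odd, then $v_2(T_k(x)) = v_2(3x+1)$; (d) if $x \equiv 5 \pmod{8}$ and $k \ge 2$ is even, then $v_2(T_k(x)) = 1$; (e) if $x \equiv 9 \pmod{16}$ and $k \ge 4$ is even, then $v_2(T_k(x)) = 2$; (f) if $x \equiv 9 \pmod{16}$ and $k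 \ge 5$ is odd, or if $x \equiv 17 \pmod{32}$ and $k \ge 4$ is even, then $v_2(T_k(x)) = 3$; (g) if $x \equiv 17 \pmod{32}$ and $k \ge 5$ is odd, then $v_2(T_k(x)) = 4$. -/
open Finset

lemma T_eq_sum_range (k x : ℕ) : T k x = ∑ i ∈ range x, (x + 1 + i) ^ k := by
  rw [T, ← Ico_add_one_right_eq_Icc, sum_Ico_eq_sum_range, show 2 * x + 1 - (x + 1) = x by omega]

lemma T_add_sum_range (k x : ℕ) :
    T k x + ∑ i ∈ range (x + 1), i ^ k = ∑ i ∈ range (2 * x + 1), i ^ k := by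
  rw [T, ← Ico_add_one_right_eq_Icc, add_comm, sum_range_add_sum_Ico _ (by omega)]

lemma six_mul_sum_range_succ_sq (n : ℕ) :
    6 * ∑ i ∈ range (n + 1), i ^ 2 = n * (n + 1) * (2 * n + 1) := by
  induction n with
  | zero => simp
  | succ n ih => rw [sum_range_succ, mul_add, ih]; ring

lemma four_mul_sum_range_succ_cube (n : ℕ) :
    4 * ∑ i ∈ range (n + 1), i ^ 3 = (n * (n + 1)) ^ 2 := by
  induction n with
  | zero => simp
  | succ n ih => rw [sum_range_succ, mul_add, ih]; ring

lemma six_mul_T_two (x : ℕ) : 6 * T 2 x = x * (2 * x + 1) * (7 * x + 1) := by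
  have h := congrArg (6 * ·) (T_add_sum_range 2 x)
  simp only [mul_add, six_mul_sum_range_succ_sq] at h
  zify at h ⊢
  linear_combination h

lemma four_mul_T_three (x : ℕ) : 4 * T 3 x = x ^ 2 * (3 * x + 1) * (5 * x + 3) := by
  have h := congrArg (4 * ·) (T_add_sum_range 3 x)
  simp only [mul_add, four_mul_sum_range_succ_cube] at h
  zify at h ⊢
  linear_combination h

lemma padicValNat_two_add_eq_of_mul_eq {e u w n m : ℕ} (hu : Odd u) (hw : Odd w) (hm : m ≠ 0)
    (h : 2 ^ e * u * n = w * m) : padicValNat 2 n + e = padicValNat 2 m := by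
  have hn : n ≠ 0 := by
    rintro rfl
    simp only [mul_zero, zero_eq_mul] at h
    exact h.elim (fun h => by simp [h] at hw) hm
  have hv := congrArg (padicValNat 2) h
  rw [padicValNat.mul (by simp [hu.pos.ne']) hn, padicValNat.mul (by simp) hu.pos.ne',
    padicValNat.mul hw.pos.ne' hm, padicValNat.prime_pow,
    padicValNat.eq_zero_of_not_dvd hu.not_two_dvd_nat,
    padicValNat.eq_zero_of_not_dvd hw.not_two_dvd_nat] at hv
  omega

lemma padicValNat_T_two {x : ℕ} (hx : Odd x) :
    padicValNat 2 (T 2 x) = padicValNat 2 (7 * x + 1) - 1 := by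
  have h := padicValNat_two_add_eq_of_mul_eq (e := 1) (u := 3) (n := T 2 x) (m := 7 * x + 1)
    (by decide) (hx.mul (by simp : Odd (2 * x + 1))) (by omega) (by rw [← six_mul_T_two]; ring)
  omega

lemma padicValNat_T_three {x : ℕ} (hx : Odd x) :
    padicValNat 2 (T 3 x) = padicValNat 2 ((5 * x + 3) * (3 * x + 1)) - 2 := by
  have h := padicValNat_two_add_eq_of_mul_eq (e := 2) (u := 1) (n := T 3 x)
    (m := (5 * x + 3) * (3 * x + 1)) (by decide) (hx.pow (n := 2)) (by positivity)
    (by rw [mul_one, show 2 ^ 2 = 4 from rfl, four_mul_T_three]; ring)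
  omega

lemma sum_range_two_mul_add_one {M : Type*} [AddCommMonoid M] (f : ℕ → M) (y : ℕ) :
    ∑ i ∈ range (2 * y + 1), f i = ∑ i ∈ range y, (f i + f (2 * y - i)) + f y := by
  rw [show 2 * y + 1 = y + 1 + y by ring, sum_range_add, sum_range_succ, sum_add_distrib,
    ← sum_range_reflect (fun i => f (y + 1 + i))]
  have h : ∀ i ∈ range y, f (y + 1 + (y - 1 - i)) = f (2 * y - i) := fun i hi => by
    rw [mem_range] at hi
    congr 1
    omega
  rw [sum_congr rfl h]
  abel

lemma Odd.pow_add_pow_modEq {k : ℕ} (hk : Odd k) (a b : ℤ) :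
    a ^ k + b ^ k ≡ (a + b) * k * a ^ (k - 1) [ZMOD (a + b) ^ 2] := by
  have h := sq_dvd_add_pow_sub_sub (a + b) (-a) k
  rw [neg_add_cancel_left, hk.neg_pow, (hk.tsub_odd odd_one).neg_pow] at h
  rw [Int.modEq_iff_dvd, show (a + b) * k * a ^ (k - 1) - (a ^ k + b ^ k)
    = -(b ^ k - a ^ (k - 1) * (a + b) * k - -a ^ k) by ring]
  exact dvd_neg.2 h

lemma T_two_mul_add_one_modEq {k : ℕ} (hk : Odd k) (y : ℕ) :
    (T k (2 * y + 1) : ℤ) ≡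
      (6 * y + 4) * (k * ∑ i ∈ range y, (2 * y + 2 + i) ^ (k - 1) : ℕ) + (3 * y + 2) ^ k
      [ZMOD (6 * y + 4) ^ 2] := by
  rw [T_eq_sum_range, sum_range_two_mul_add_one]
  push_cast
  refine Int.ModEq.add ?_ (congrArg (· % _) (by ring))
  rw [mul_sum, mul_sum]
  refine Int.ModEq.sum fun i hi => ?_
  have h := hk.pow_add_pow_modEq (2 * y + 2 + i) (4 * y + 2 - i)
  rw [show (2 * y + 2 + i : ℤ) + (4 * y + 2 - i) = 6 * y + 4 by ring] at h
  rw [Nat.cast_sub (by rw [mem_range] at hi; omega)]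
  convert h using 1 <;> push_cast <;> ring

lemma odd_sum_range_pow {k y : ℕ} (hy : y % 4 = 2) (hk : k ≠ 0) :
    Odd (∑ i ∈ range y, (2 * y + 2 + i) ^ k) := by
  have hterm : ∀ i ∈ range y, (2 * y + 2 + i) ^ k ≡ i [MOD 2] := fun i _ => by
    rcases Nat.mod_two_eq_zero_or_one i with h | h <;>
      simp [Nat.ModEq, Nat.pow_mod, Nat.add_mod, h, hk]
  obtain ⟨t, rfl⟩ : ∃ t, y = 4 * t + 2 := ⟨y / 4, by omega⟩
  have hgauss : ∑ i ∈ range (4 * t + 2), i = (2 * t + 1) * (4 * t + 1) := by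
    have := sum_range_id_mul_two (4 * t + 2)
    rw [show 4 * t + 2 - 1 = 4 * t + 1 by omega] at this
    linarith
  rw [Nat.odd_iff, Nat.ModEq.sum hterm, hgauss, ← Nat.odd_iff]
  exact Nat.odd_mul.2 ⟨odd_two_mul_add_one t, ⟨2 * t, by ring⟩⟩

lemma padicValInt_two_eq_of_modEq {t c q : ℤ} (hc : c ≠ 0) (hq : Odd q)
    (h : t ≡ c * q [ZMOD 2 * c]) : padicValInt 2 t = padicValInt 2 c := by
  obtain ⟨w, hw⟩ := Int.modEq_iff_dvd.1 h
  have hq' : Odd (q - 2 * w) := hq.sub_even (even_two_mul w)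
  rw [show t = c * (q - 2 * w) by linear_combination -hw, padicValInt.mul hc (by
    rintro h; simp [h] at hq'), padicValInt.eq_zero_of_not_dvd (z := q - 2 * w) (by
    simpa [← even_iff_two_dvd] using hq'), add_zero]

lemma padicValNat_T_of_mod_eight_eq_five {k x : ℕ} (hx : x % 8 = 5) (hk3 : 3 ≤ k)
    (hk : Odd k) : padicValNat 2 (T k x) = padicValNat 2 (3 * x + 1) := by
  obtain ⟨y, rfl⟩ : ∃ y, x = 2 * y + 1 := ⟨x / 2, by omega⟩
  obtain ⟨m, hm⟩ : ∃ m, 3 * y + 2 = 4 * m := ⟨(3 * y + 2) / 4, by omega⟩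
  have hq := hk.mul (odd_sum_range_pow (by omega : y % 4 = 2) (by omega : k - 1 ≠ 0))
  have hsq : (2 * (6 * y + 4) : ℤ) ∣ (6 * y + 4) ^ 2 := ⟨3 * y + 2, by ring⟩
  have hmid : (2 * (6 * y + 4) : ℤ) ∣ (3 * y + 2) ^ k := by
    have hm' : (3 * y + 2 : ℤ) = 4 * m := by exact_mod_cast hm
    rw [show (2 * (6 * y + 4) : ℤ) = 16 * m by linear_combination 4 * hm', hm']
    exact (Dvd.intro m (by ring) : (16 * m : ℤ) ∣ (4 * m) ^ 2).trans (pow_dvd_pow _ (by omega))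
  have h := ((T_two_mul_add_one_modEq hk y).of_dvd hsq).trans
    ((Int.modEq_zero_iff_dvd.2 hmid).add_left _)
  rw [add_zero] at h
  have hval := padicValInt_two_eq_of_modEq (by positivity) ((Int.odd_coe_nat _).2 hq) h
  rw [padicValInt.of_nat] at hval
  rw [hval, show (6 * y + 4 : ℤ) = ((3 * (2 * y + 1) + 1 : ℕ) : ℤ) by push_cast; ring,
    padicValInt.of_nat]

lemma sum_range_add_pow_modEq {n P : ℕ} (hP : n ∣ P) (k N : ℕ) :
    ∑ i ∈ range (P + N), i ^ k ≡
      ∑ i ∈ range P, i ^ k + ∑ i ∈ range N, i ^ k [MOD n] := by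
  rw [sum_range_add]
  refine Nat.ModEq.add_left _ (Nat.ModEq.sum fun i _ => Nat.ModEq.pow k ?_)
  simpa using (Nat.modEq_zero_iff_dvd.2 hP).add_right i

lemma sum_range_two_pow_succ_pow_modEq_zero (k r : ℕ) :
    ∑ i ∈ range (2 ^ (r + 1)), i ^ k ≡ 0 [MOD 2 ^ r] := by
  induction r with
  | zero => exact Nat.modEq_one
  | succ r ih =>
    have h := sum_range_add_pow_modEq (dvd_refl (2 ^ (r + 1))) k (2 ^ (r + 1))
    rw [← two_mul, ← pow_succ'] at h
    refine h.trans (Nat.modEq_zero_iff_dvd.2 ?_)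
    have := mul_dvd_mul_left 2 (Nat.modEq_zero_iff_dvd.1 ih)
    rwa [← pow_succ', two_mul] at this

lemma sum_range_two_pow_add_pow_modEq (k r N : ℕ) :
    ∑ i ∈ range (2 ^ (r + 1) + N), i ^ k ≡ ∑ i ∈ range N, i ^ k [MOD 2 ^ r] := by
  simpa using (sum_range_add_pow_modEq (pow_dvd_pow 2 r.le_succ) k N).trans
    ((sum_range_two_pow_succ_pow_modEq_zero k r).add_right _)

lemma T_add_two_pow_modEq (k x r : ℕ) : T k (x + 2 ^ (r + 1)) ≡ T k x [MOD 2 ^ r] := by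
  have h := T_add_sum_range k (x + 2 ^ (r + 1))
  rw [show x + 2 ^ (r + 1) + 1 = 2 ^ (r + 1) + (x + 1) by ring,
    show 2 * (x + 2 ^ (r + 1)) + 1 = 2 ^ (r + 1) + (2 ^ (r + 1) + (2 * x + 1)) by ring] at h
  refine Nat.ModEq.add_right_cancel (sum_range_two_pow_add_pow_modEq k r (x + 1)) ?_
  rw [h, T_add_sum_range]
  exact (sum_range_two_pow_add_pow_modEq k r _).trans (sum_range_two_pow_add_pow_modEq k r _)

lemma T_modEq_T_mod (k x r : ℕ) : T k x ≡ T k (x % 2 ^ (r + 1)) [MOD 2 ^ r] := by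
  conv_lhs => rw [← Nat.mod_add_div x (2 ^ (r + 1))]
  induction x / 2 ^ (r + 1) with
  | zero => rfl
  | succ q ih => rw [mul_add_one, ← add_assoc]; exact (T_add_two_pow_modEq k _ r).trans ih

lemma odd_pow_two_pow_modEq_one {j : ℕ} (hj : Odd j) (s : ℕ) :
    j ^ 2 ^ (s + 1) ≡ 1 [MOD 2 ^ (s + 3)] := by
  induction s with
  | zero =>
    obtain ⟨t, rfl⟩ := hj
    obtain ⟨u, hu⟩ := Nat.even_mul_succ_self t
    have hu' : (t : ℤ) * (t + 1) = u + u := by exact_mod_cast hu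
    rw [Nat.modEq_iff_dvd]
    push_cast
    exact ⟨-u, by linear_combination (-4) * hu'⟩
  | succ s ih =>
    rw [Nat.modEq_iff_dvd] at ih ⊢
    obtain ⟨t, ht⟩ := ih
    rw [pow_succ 2 (s + 1), pow_mul]
    push_cast at ht ⊢
    exact ⟨t * (1 - 2 ^ (s + 2) * t),
      by linear_combination (1 + (j : ℤ) ^ 2 ^ (s + 1) - 2 ^ (s + 3) * t) * ht⟩

lemma pow_add_mul_two_pow_modEq {r s k : ℕ} (hr : r ≤ s + 3) (hk : r ≤ k) (j q : ℕ) :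
    j ^ (k + 2 ^ (s + 1) * q) ≡ j ^ k [MOD 2 ^ r] := by
  rcases Nat.even_or_odd j with ⟨i, rfl⟩ | hj
  · have h2 : ∀ n, r ≤ n → (i + i) ^ n ≡ 0 [MOD 2 ^ r] := fun n hn =>
      Nat.modEq_zero_iff_dvd.2 ((pow_dvd_pow 2 hn).trans (by rw [← two_mul, mul_pow]; simp))
    exact (h2 _ (hk.trans (Nat.le_add_right _ _))).trans (h2 k hk).symm
  · have h := ((odd_pow_two_pow_modEq_one hj s).pow q).of_dvd (pow_dvd_pow 2 hr)
    simpa [pow_add, pow_mul] using h.mul_left (j ^ k)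

lemma T_modEq_T_exp_mod {r s k : ℕ} (hr : r ≤ s + 3) (hk : r ≤ k) (x : ℕ) :
    T k x ≡ T (k % 2 ^ (s + 1) + 2 ^ (s + 2)) x [MOD 2 ^ r] := by
  have hk' : r ≤ k % 2 ^ (s + 1) + 2 ^ (s + 2) :=
    le_add_left (hr.trans (Nat.lt_two_pow_self (n := s + 2)))
  have hexp :
      k + 2 ^ (s + 1) * 2 = k % 2 ^ (s + 1) + 2 ^ (s + 2) + 2 ^ (s + 1) * (k / 2 ^ (s + 1)) := by
    have := Nat.mod_add_div k (2 ^ (s + 1))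
    rw [pow_succ 2 (s + 1)]
    omega
  have hT : ∀ {k'}, r ≤ k' → ∀ q, T (k' + 2 ^ (s + 1) * q) x ≡ T k' x [MOD 2 ^ r] :=
    fun hrk q => Nat.ModEq.sum fun j _ => pow_add_mul_two_pow_modEq hr hrk j q
  exact (hT hk 2).symm.trans (hexp ▸ hT hk' _)

lemma T_mod_two_pow {r s k : ℕ} (hr : r ≤ s + 3) (hk : r ≤ k) (x : ℕ) :
    T k x % 2 ^ r = T (k % 2 ^ (s + 1) + 2 ^ (s + 2)) (x % 2 ^ (r + 1)) % 2 ^ r :=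
  (T_modEq_T_exp_mod hr hk x).trans (T_modEq_T_mod _ x r)

lemma padicValNat_two_eq_of_mod {n v : ℕ} (h : n % 2 ^ (v + 1) = 2 ^ v) :
    padicValNat 2 n = v := by
  have hn : n = 2 ^ v * (2 * (n / 2 ^ (v + 1)) + 1) := by
    have := Nat.mod_add_div n (2 ^ (v + 1))
    rw [h] at this
    rw [pow_succ] at this ⊢
    linarith
  rw [hn, padicValNat.mul (by positivity) (by omega), padicValNat.prime_pow,
    padicValNat.eq_zero_of_not_dvd (by omega), add_zero]

lemma T_mod_four_of_mod_eight_eq_five {k x : ℕ} (hx : x % 8 = 5) (hk : 2 ≤ k) (hke : Even k) :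
    T k x % 4 = 2 := by
  have h := T_mod_two_pow (r := 2) (s := 0) (by norm_num) hk x
  norm_num at h
  rw [h, hx, Nat.even_iff.1 hke]
  decide

lemma T_mod_eight_of_mod_sixteen_eq_nine {k x : ℕ} (hx : x % 16 = 9) (hk : 4 ≤ k)
    (hke : Even k) : T k x % 8 = 4 := by
  have h := T_mod_two_pow (r := 3) (s := 0) (by norm_num) (by omega : 3 ≤ k) x
  norm_num at h
  rw [h, hx, Nat.even_iff.1 hke]
  decide

lemma T_mod_sixteen_of_mod_sixteen_eq_nine {k x : ℕ} (hx : x % 16 = 9) (hk : 5 ≤ k)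
    (hko : Odd k) : T k x % 16 = 8 := by
  have h := T_mod_two_pow (r := 4) (s := 1) (by norm_num) (by omega : 4 ≤ k) x
  norm_num at h
  rw [h]
  have hx' : x % 32 = 9 ∨ x % 32 = 25 := by omega
  have hk' : k % 4 = 1 ∨ k % 4 = 3 := by have := Nat.odd_iff.1 hko; omega
  rcases hx' with hx' | hx' <;> rcases hk' with hk' | hk' <;> rw [hx', hk'] <;> decide

lemma T_mod_sixteen_of_mod_thirty_two_eq_seventeen {k x : ℕ} (hx : x % 32 = 17) (hk : 4 ≤ k)
    (hke : Even k) : T k x % 16 = 8 := by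
  have h := T_mod_two_pow (r := 4) (s := 1) (by norm_num) hk x
  norm_num at h
  rw [h, hx]
  have hk' : k % 4 = 0 ∨ k % 4 = 2 := by have := Nat.even_iff.1 hke; omega
  rcases hk' with hk' | hk' <;> rw [hk'] <;> decide

lemma T_mod_thirty_two_of_mod_thirty_two_eq_seventeen {k x : ℕ} (hx : x % 32 = 17) (hk : 5 ≤ k)
    (hko : Odd k) : T k x % 32 = 16 := by
  have h := T_mod_two_pow (r := 5) (s := 2) (by norm_num) hk x
  norm_num at h
  rw [h]
  have hx' : x % 64 = 17 ∨ x % 64 = 49 := by omega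
  have hk' : k % 8 = 1 ∨ k % 8 = 3 ∨ k % 8 = 5 ∨ k % 8 = 7 := by
    have := Nat.odd_iff.1 hko; omega
  rcases hx' with hx' | hx' <;> rcases hk' with hk' | hk' | hk' | hk' <;> rw [hx', hk'] <;> decide

theorem stmt_18_general (x k : ℕ) (hk : 2 ≤ k) :
    (x % 8 = 1 → k = 2 → padicValNat 2 (T k x) = padicValNat 2 (7 * x + 1) - 1) ∧
    (x % 8 = 1 → k = 3 →
      padicValNat 2 (T k x) = padicValNat 2 ((5 * x + 3) * (3 * x + 1)) - 2) ∧
    (x % 8 = 5 → 3 ≤ k → Odd k → padicValNat 2 (T k x) = padicValNat 2 (3 * x + 1)) ∧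
    (x % 8 = 5 → Even k → padicValNat 2 (T k x) = 1) ∧
    (x % 16 = 9 → 4 ≤ k → Even k → padicValNat 2 (T k x) = 2) ∧
    ((x % 16 = 9 ∧ 5 ≤ k ∧ Odd k) ∨ (x % 32 = 17 ∧ 4 ≤ k ∧ Even k) →
      padicValNat 2 (T k x) = 3) ∧
    (x % 32 = 17 → 5 ≤ k → Odd k → padicValNat 2 (T k x) = 4) := by
  refine ⟨fun hx hk2 => ?_, fun hx hk3 => ?_, fun hx hk3 hko => ?_, fun hx hke => ?_,
    fun hx hk4 hke => ?_, fun h => ?_, fun hx hk5 hko => ?_⟩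
  · subst hk2
    exact padicValNat_T_two (Nat.odd_iff.2 (by omega))
  · subst hk3
    exact padicValNat_T_three (Nat.odd_iff.2 (by omega))
  · exact padicValNat_T_of_mod_eight_eq_five hx hk3 hko
  · exact padicValNat_two_eq_of_mod (v := 1) (T_mod_four_of_mod_eight_eq_five hx hk hke)
  · exact padicValNat_two_eq_of_mod (v := 2) (T_mod_eight_of_mod_sixteen_eq_nine hx hk4 hke)
  · refine padicValNat_two_eq_of_mod (v := 3) ?_
    rcases h with ⟨hx, hk5, hko⟩ | ⟨hx, hk4, hke⟩
    · exact T_mod_sixteen_of_mod_sixteen_eq_nine hx hk5 hko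
    · exact T_mod_sixteen_of_mod_thirty_two_eq_seventeen hx hk4 hke
  · exact padicValNat_two_eq_of_mod (v := 4)
      (T_mod_thirty_two_of_mod_thirty_two_eq_seventeen hx hk5 hko)

theorem stmt_18 (x k : ℕ) (hx : 0 < x) (hxodd : Odd x)
    (hx8 : x % 8 = 1 ∨ x % 8 = 5) (hx32 : x % 32 ≠ 1) (hk : 2 ≤ k) :
    (x % 8 = 1 → k = 2 → padicValNat 2 (T k x) = padicValNat 2 (7 * x + 1) - 1) ∧
    (x % 8 = 1 → k = 3 →
      padicValNat 2 (T k x) = padicValNat 2 ((5 * x + 3) * (3 * x + 1)) - 2) ∧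
    (x % 8 = 5 → 3 ≤ k → Odd k → padicValNat 2 (T k x) = padicValNat 2 (3 * x + 1)) ∧
    (x % 8 = 5 → Even k → padicValNat 2 (T k x) = 1) ∧
    (x % 16 = 9 → 4 ≤ k → Even k → padicValNat 2 (T k x) = 2) ∧
    ((x % 16 = 9 ∧ 5 ≤ k ∧ Odd k) ∨ (x % 32 = 17 ∧ 4 ≤ k ∧ Even k) →
      padicValNat 2 (T k x) = 3) ∧
    (x % 32 = 17 → 5 ≤ k → Odd k → padicValNat 2 (T k x) = 4) :=
  stmt_18_general x k hk
end
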